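/- arXiv:math/0301107 — 6 statements merged into one kernel-verified Lean document; each statement's English description precedes it below -/
import Mathlib

section
/- Let f be holomorphic on ℂ \ {0} and suppose f maps the open right half-plane Π into Π, the open left half-plane −Π into −Π, the open upper half-plane iΠ into iΠ, and the open lower half-plane −iΠ into −iΠ. Then there exists a real number α > 0 such that f(z) = α·z for all z ∈ ℂ \ {0}. -/
/-!
Every `z ≠ 0` and its image `f z` lie in the same closed quadrant, so `g z = f z / z` has positive
real part. Then `(g + 1)⁻¹` is holomorphic on `ℂ \ {0}` and bounded by `1`, hence constant by the
removable singularity theorem and Liouville's theorem; so `f z = c z`. Finally `c` is real, since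
`z ↦ c z` maps the upper half-plane into itself only if `c` is real and positive.
-/

open Complex Set Bornology Filter Topology

namespace Complex

theorem apply_eq_apply_of_differentiableOn_compl_singleton_of_norm_le {E : Type*}
    [NormedAddCommGroup E] [NormedSpace ℂ E] [CompleteSpace E] {f : ℂ → E} {c : ℂ} {C : ℝ}
    (hf : DifferentiableOn ℂ f {c}ᶜ) (hC : ∀ z, z ≠ c → ‖f z‖ ≤ C) {z w : ℂ}
    (hz : z ≠ c) (hw : w ≠ c) : f z = f w := by
  set F := Function.update f c (limUnder (𝓝[≠] c) f)
  have hfC : IsBounded (f '' {c}ᶜ) :=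
    isBounded_iff_forall_norm_le.2 ⟨C, by rintro _ ⟨z, hz, rfl⟩; exact hC z hz⟩
  have hF : Differentiable ℂ F := by
    rw [← differentiableOn_univ]
    refine differentiableOn_update_limUnder_of_bddAbove univ_mem ?_ ?_
    · simpa [← compl_eq_univ_sdiff] using hf
    · exact ⟨C, by rintro _ ⟨z, hz, rfl⟩; exact hC z hz.2⟩
  have hFrange : range F ⊆ insert (F c) (f '' {c}ᶜ) := by
    rintro _ ⟨x, rfl⟩
    by_cases hx : x = c
    · exact hx ▸ mem_insert _ _
    · exact mem_insert_of_mem _ ⟨x, hx, (Function.update_of_ne hx _ _).symm⟩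
  have := hF.apply_eq_apply_of_bounded ((hfC.insert _).subset hFrange) z w
  simpa [F, Function.update_of_ne hz, Function.update_of_ne hw] using this

theorem apply_eq_apply_of_differentiableOn_compl_singleton_of_re_pos {g : ℂ → ℂ} {c : ℂ}
    (hg : DifferentiableOn ℂ g {c}ᶜ) (hre : ∀ z, z ≠ c → 0 < (g z).re) {z w : ℂ}
    (hz : z ≠ c) (hw : w ≠ c) : g z = g w := by
  have hne : ∀ z, z ≠ c → g z + 1 ≠ 0 := fun z hz h0 => by
    have := congrArg re h0
    simp only [add_re, one_re, zero_re] at this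
    linarith [hre z hz]
  have hbound : ∀ z, z ≠ c → ‖(g z + 1)⁻¹‖ ≤ 1 := fun z hz => by
    rw [norm_inv]
    refine inv_le_one_of_one_le₀ ?_
    calc (1 : ℝ) ≤ (g z + 1).re := by simp [(hre z hz).le]
      _ ≤ ‖g z + 1‖ := re_le_norm _
  have := apply_eq_apply_of_differentiableOn_compl_singleton_of_norm_le
    ((hg.add_const 1).inv hne) hbound hz hw
  simpa using this

theorem re_div_pos {w z : ℂ} (hz : z ≠ 0) (hre : z.re ≠ 0 → 0 < w.re * z.re)
    (him : z.im ≠ 0 → 0 < w.im * z.im) : 0 < (w / z).re := by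
  have hsum : 0 < w.re * z.re + w.im * z.im := by
    by_cases hr : z.re = 0
    · have hi : z.im ≠ 0 := fun hi => hz (ext hr hi)
      simpa [hr] using him hi
    · by_cases hi : z.im = 0
      · simpa [hi] using hre hr
      · linarith [hre hr, him hi]
  rw [div_re, ← add_div]
  exact div_pos hsum (normSq_pos.2 hz)

theorem im_eq_zero_of_forall_im_mul_pos {c : ℂ} (h : ∀ z : ℂ, 0 < z.im → 0 < (c * z).im) :
    c.im = 0 := by
  have hre : 0 < c.re := by simpa using h I
  by_contra hc
  -- for this `z`, `(c * z).im = -c.im ^ 2 / 2`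
  have := h ⟨-c.im, c.im ^ 2 / (2 * c.re)⟩ (by positivity)
  simp only [mul_im] at this
  field_simp at this
  nlinarith [sq_pos_of_ne_zero hc]

end Complex

/-- If `f` is holomorphic on `ℂ \ {0}` and maps each of the four open half-planes
(right, left, upper, lower) into itself, then `f z = α z` for some real `α > 0`. -/
theorem stmt_0 (f : ℂ → ℂ)
    (hf : DifferentiableOn ℂ f {(0 : ℂ)}ᶜ)
    (hR : ∀ z : ℂ, 0 < z.re → 0 < (f z).re)
    (hL : ∀ z : ℂ, z.re < 0 → (f z).re < 0)
    (hU : ∀ z : ℂ, 0 < z.im → 0 < (f z).im)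
    (hD : ∀ z : ℂ, z.im < 0 → (f z).im < 0) :
    ∃ α : ℝ, 0 < α ∧ ∀ z : ℂ, z ≠ 0 → f z = (α : ℂ) * z := by
  have hre : ∀ z, z ≠ 0 → 0 < (f z / z).re := fun z hz => re_div_pos hz
    (fun hr => hr.lt_or_gt.elim (fun h => mul_pos_of_neg_of_neg (hL z h) h)
      (fun h => mul_pos (hR z h) h))
    (fun hi => hi.lt_or_gt.elim (fun h => mul_pos_of_neg_of_neg (hD z h) h)
      (fun h => mul_pos (hU z h) h))
  have hlin : ∀ z, z ≠ 0 → f z = f 1 * z := fun z hz => by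
    have := apply_eq_apply_of_differentiableOn_compl_singleton_of_re_pos (g := fun z => f z / z)
      (hf.div differentiableOn_id fun _ h => h) hre hz one_ne_zero
    rwa [div_one, div_eq_iff hz] at this
  have him : (f 1).im = 0 := im_eq_zero_of_forall_im_mul_pos fun z hz => by
    rw [← hlin z (by rintro rfl; simp at hz)]
    exact hU z hz
  have hreal : ((f 1).re : ℂ) = f 1 := ext rfl (by simp [him])
  exact ⟨(f 1).re, hR 1 one_pos, fun z hz => by rw [hlin z hz, hreal]⟩
end

section
/- Let f be holomorphic on ℂ \ {0} and suppose f does not take any value in the closed negative real semi-axis (−∞, 0]. Then f has a removable singularity at 0. -/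
open Complex Filter Function Set Topology

/-- If `f` is holomorphic on `ℂ \ {0}` and omits the closed negative real semi-axis
`(-∞, 0]`, then `f` has a removable singularity at `0`: it extends to an entire function. -/
theorem stmt_1 (f : ℂ → ℂ)
    (hf : DifferentiableOn ℂ f {(0 : ℂ)}ᶜ)
    (homit : ∀ z : ℂ, z ≠ 0 → ¬ ((f z).im = 0 ∧ (f z).re ≤ 0)) :
    ∃ g : ℂ → ℂ, Differentiable ℂ g ∧ ∀ z : ℂ, z ≠ 0 → g z = f z := by
  -- f z lies in the slit plane
  have hslit : ∀ z : ℂ, z ≠ 0 → f z ∈ Complex.slitPlane := by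
    intro z hz
    rcases lt_or_ge 0 (f z).re with h | h
    · exact Or.inl h
    · exact Or.inr fun him => homit z hz ⟨him, h⟩
  have hfne : ∀ z : ℂ, z ≠ 0 → f z ≠ 0 := fun z hz =>
    Complex.slitPlane_ne_zero (hslit z hz)
  set h : ℂ → ℂ := fun z => f z ^ (1/2 : ℂ) with hh
  -- Re (h z) ≥ 0
  have hre : ∀ z : ℂ, z ≠ 0 → 0 ≤ (h z).re := by
    intro z hz
    have hne := hfne z hz
    have : h z = Complex.exp (Complex.log (f z) * (1/2 : ℂ)) := by
      simp [hh, Complex.cpow_def_of_ne_zero hne]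
    rw [this, Complex.exp_re]
    have him : (Complex.log (f z) * (1/2 : ℂ)).im = Complex.arg (f z) / 2 := by
      have : ((1:ℂ)/2).im = 0 := by norm_num
      simp [Complex.mul_im, this, Complex.log_im]
      norm_num
      ring
    rw [him]
    have h1 : -(Real.pi/2) ≤ Complex.arg (f z) / 2 := by
      have := Complex.neg_pi_lt_arg (f z); linarith
    have h2 : Complex.arg (f z) / 2 ≤ Real.pi/2 := by
      have := Complex.arg_le_pi (f z); linarith
    have := Real.cos_nonneg_of_mem_Icc ⟨h1, h2⟩
    positivity
  -- h z + 1 ≠ 0 and ‖(h z + 1)⁻¹‖ ≤ 1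
  have hnorm : ∀ z : ℂ, z ≠ 0 → 1 ≤ ‖h z + 1‖ := by
    intro z hz
    have h1 : 1 ≤ (h z + 1).re := by
      have := hre z hz; simp [Complex.add_re]; linarith
    calc (1:ℝ) ≤ (h z + 1).re := h1
      _ ≤ |(h z + 1).re| := le_abs_self _
      _ ≤ ‖h z + 1‖ := Complex.abs_re_le_norm _
  have hne1 : ∀ z : ℂ, z ≠ 0 → h z + 1 ≠ 0 := by
    intro z hz h0
    have := hnorm z hz; rw [h0] at this; norm_num at this
  set q : ℂ → ℂ := fun z => (h z + 1)⁻¹ with hq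
  have hqb : ∀ z : ℂ, z ≠ 0 → ‖q z‖ ≤ 1 := by
    intro z hz
    rw [hq]
    simp only [norm_inv]
    rw [inv_le_one_iff₀]
    right
    exact hnorm z hz
  -- q is differentiable on {0}ᶜ
  have hqd : DifferentiableOn ℂ q {(0:ℂ)}ᶜ := by
    intro z hz
    have hz0 : z ≠ 0 := hz
    have hfd : DifferentiableAt ℂ f z :=
      hf.differentiableAt (isOpen_compl_singleton.mem_nhds hz)
    have hhd : DifferentiableAt ℂ h z :=
      hfd.cpow (differentiableAt_const _) (hslit z hz0)
    exact ((hhd.add_const 1).inv (hne1 z hz0)).differentiableWithinAt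
  -- removable singularity
  set Q : ℂ → ℂ := update q 0 (limUnder (𝓝[≠] (0:ℂ)) q) with hQ
  have hQd : Differentiable ℂ Q := by
    rw [← differentiableOn_univ]
    apply Complex.differentiableOn_update_limUnder_of_bddAbove (univ_mem)
      (by simpa [Set.diff_eq, Set.inter_comm] using hqd)
    refine ⟨1, ?_⟩
    rintro r ⟨z, ⟨-, hz⟩, rfl⟩
    exact hqb z hz
  have hQeq : ∀ z : ℂ, z ≠ 0 → Q z = q z := fun z hz => update_of_ne hz _ _
  -- Q is bounded
  have hQb : Bornology.IsBounded (range Q) := by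
    apply isBounded_iff_forall_norm_le.2
    refine ⟨1, ?_⟩
    rintro r ⟨z, rfl⟩
    rcases eq_or_ne z 0 with rfl | hz
    · -- by continuity
      have hc : ContinuousAt Q 0 := hQd.continuous.continuousAt
      have ht : Tendsto Q (𝓝[≠] (0:ℂ)) (𝓝 (Q 0)) :=
        (hc.tendsto).mono_left nhdsWithin_le_nhds
      refine le_of_tendsto (ht.norm) ?_
      filter_upwards [self_mem_nhdsWithin] with w hw
      rw [hQeq w hw]; exact hqb w hw
    · rw [hQeq z hz]; exact hqb z hz
  -- Liouville: Q constant
  have hconst : ∀ z : ℂ, z ≠ 0 → q z = q 1 := by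
    intro z hz
    have := hQd.apply_eq_apply_of_bounded hQb z 1
    rwa [hQeq z hz, hQeq 1 one_ne_zero] at this
  have hhconst : ∀ z : ℂ, z ≠ 0 → h z = h 1 := by
    intro z hz
    have := hconst z hz
    have := inv_injective this
    have h3 : h z + 1 = h 1 + 1 := this
    exact add_right_cancel h3
  -- f z = h z * h z
  have hsq : ∀ z : ℂ, z ≠ 0 → f z = h z * h z := by
    intro z hz
    have hne := hfne z hz
    rw [hh]
    rw [← Complex.cpow_add _ _ hne]
    norm_num
  refine ⟨fun _ => f 1, differentiable_const _, ?_⟩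
  intro z hz
  rw [hsq z hz, hhconst z hz, ← hsq 1 one_ne_zero]
end

section
/- For N ≥ 3, the closure of Ω_N := ⋃_{λ ∈ 𝕋} (λΠ)^N is a proper subset of ℂ^N. In particular, the point z = (1, e^{2πi/N}, …, e^{2πi(N−1)/N}) does not belong to the closure of Ω_N. -/
/-!
The closure of `Ω_N` lies in the union of the closed polydomains `(λΠ̄)^N`, and that union is
closed because the parameter `λ` ranges over the compact circle. The `N`-th roots of unity sum
to zero, so if all of them lay in one closed half-plane `λΠ̄` they would all lie on its boundary
line `λiℝ`; this is impossible for `N ≥ 3`, since then `1` and `e^{2πi/N}` are `ℝ`-linearly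
independent.
-/

open Complex Real

open ComplexConjugate

def Omega (N : ℕ) : Set (Fin N → ℂ) :=
  {z | ∃ l : ℂ, ‖l‖ = 1 ∧ ∀ k, ∃ w : ℂ, 0 < w.re ∧ z k = l * w}

-- `conj l * z k` has nonnegative real part iff `z k ∈ l • Π̄`.
def closedOmega (N : ℕ) : Set (Fin N → ℂ) :=
  {z | ∃ l : Circle, ∀ k, 0 ≤ (conj (l : ℂ) * z k).re}

theorem isClosed_closedOmega (N : ℕ) : IsClosed (closedOmega N) := by
  have hproj : closedOmega N =
      Prod.snd '' {p : Circle × (Fin N → ℂ) | ∀ k, 0 ≤ (conj (p.1 : ℂ) * p.2 k).re} := by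
    ext z
    simp [closedOmega]
  rw [hproj]
  refine isClosedMap_snd_of_compactSpace _ ?_
  simp only [Set.ofPred_forall]
  exact isClosed_iInter fun k => isClosed_le continuous_const (by fun_prop)

theorem Omega_subset_closedOmega (N : ℕ) : Omega N ⊆ closedOmega N := by
  rintro z ⟨l, hl, hz⟩
  refine ⟨⟨l, mem_sphere_zero_iff_norm.2 hl⟩, fun k => ?_⟩
  obtain ⟨w, hw, hzk⟩ := hz k
  have hconj : conj l * l = 1 := by
    rw [mul_comm, mul_conj', hl]; norm_num
  simpa [hzk, ← mul_assoc, hconj] using hw.le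

theorem closure_Omega_subset_closedOmega (N : ℕ) : closure (Omega N) ⊆ closedOmega N :=
  closure_minimal (Omega_subset_closedOmega N) (isClosed_closedOmega N)

theorem IsPrimitiveRoot.im_ne_zero {ζ : ℂ} {n : ℕ} (hζ : IsPrimitiveRoot ζ n) (hn : 3 ≤ n) :
    ζ.im ≠ 0 := by
  intro him
  have hsq : ζ ^ 2 = 1 := by
    calc ζ ^ 2 = ζ * conj ζ := by rw [sq, conj_eq_iff_im.2 him]
      _ = 1 := by rw [mul_conj', hζ.norm'_eq_one (by omega)]; norm_num
  have := Nat.le_of_dvd two_pos ((hζ.pow_eq_one_iff_dvd 2).1 hsq)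
  omega

theorem Complex.eq_zero_of_re_eq_zero_of_re_mul_eq_zero {c w : ℂ} (hc : c.re = 0)
    (hcw : (c * w).re = 0) (hw : w.im ≠ 0) : c = 0 := by
  rw [mul_re, hc, zero_mul, zero_sub, neg_eq_zero] at hcw
  exact Complex.ext hc ((mul_eq_zero.1 hcw).resolve_right hw)

theorem IsPrimitiveRoot.powers_notMem_closedOmega {N : ℕ} {ζ : ℂ} (hζ : IsPrimitiveRoot ζ N)
    (hN : 3 ≤ N) :
    (fun k : Fin N => ζ ^ (k : ℕ)) ∉ closedOmega N := by
  rintro ⟨l, hl⟩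
  have hsum : ∑ k : Fin N, (conj (l : ℂ) * ζ ^ (k : ℕ)).re = 0 := by
    rw [← re_sum, ← Finset.mul_sum, Fin.sum_univ_eq_sum_range (ζ ^ ·),
      hζ.geom_sum_eq_zero (by omega), mul_zero, zero_re]
  have hre : ∀ k : Fin N, (conj (l : ℂ) * ζ ^ (k : ℕ)).re = 0 := fun k =>
    (Finset.sum_eq_zero_iff_of_nonneg fun k _ => hl k).1 hsum k (Finset.mem_univ k)
  have hl0 : conj (l : ℂ) = 0 :=
    eq_zero_of_re_eq_zero_of_re_mul_eq_zero (by simpa using hre ⟨0, by omega⟩)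
      (by simpa using hre ⟨1, by omega⟩) (hζ.im_ne_zero hN)
  exact l.coe_ne_zero ((map_eq_zero _).1 hl0)

/-- For `N ≥ 3`, the closure of `Ω_N` is a proper subset of `ℂ^N`; in particular the
point `(1, e^{2πi/N}, …, e^{2πi(N-1)/N})` is not in the closure. -/
theorem stmt_5 (N : ℕ) (hN : 3 ≤ N) :
    closure (Omega N) ≠ Set.univ ∧
      (fun k : Fin N => Complex.exp (2 * Real.pi * Complex.I * (k : ℕ) / N)) ∉
        closure (Omega N) := by
  have hζ := isPrimitiveRoot_exp N (by omega)
  have hpoint : (fun k : Fin N => Complex.exp (2 * Real.pi * Complex.I * (k : ℕ) / N)) =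
      fun k : Fin N => exp (2 * π * I / N) ^ (k : ℕ) := by
    funext k
    rw [← Complex.exp_nat_mul]
    ring_nf
  have hnot : (fun k : Fin N => Complex.exp (2 * Real.pi * Complex.I * (k : ℕ) / N)) ∉
      closure (Omega N) := hpoint ▸ fun h =>
    hζ.powers_notMem_closedOmega hN (closure_Omega_subset_closedOmega N h)
  exact ⟨fun h => hnot (h ▸ Set.mem_univ _), hnot⟩
end

section
/- The closure of Ω_N := ⋃_{λ ∈ 𝕋} (λΠ)^N equals ⋃_{λ ∈ 𝕋} (λ·clos(Π))^N, where clos(Π) is the closed right half-plane. -/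
open Complex

/-!
Both sides are `𝕋 • S^N` for a subset `S` of `ℂ`, with the circle group acting diagonally.
Since `𝕋` is compact, `𝕋 • closure T` is closed for every `T`, so taking closures commutes with
the action of `𝕋`; and the closure of a product is the product of the closures.
-/

open Set Pointwise

theorem closure_smul_of_isCompact {G X : Type*} [Group G] [TopologicalSpace G] [ContinuousInv G]
    [TopologicalSpace X] [MulAction G X] [ContinuousSMul G X] {s : Set G} (hs : IsCompact s)
    (t : Set X) : closure (s • t) = s • closure t :=
  Subset.antisymm
    (closure_minimal (smul_subset_smul_left subset_closure)
      (isClosed_closure.smul_left_of_isCompact hs))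
    (set_smul_closure_subset s t)

theorem Circle.univ_smul_pi_setOf {ι : Type*} (p : ℂ → Prop) :
    (univ : Set Circle) • univ.pi (fun _ : ι => {w | p w}) =
      {z | ∃ l : ℂ, ‖l‖ = 1 ∧ ∀ k, ∃ w, p w ∧ z k = l * w} := by
  ext z
  constructor
  · rintro ⟨l, -, w, hw, rfl⟩
    exact ⟨l, l.norm_coe, fun k => ⟨w k, hw k trivial, rfl⟩⟩
  · rintro ⟨l, hl, hz⟩
    choose w hw hzw using hz
    exact ⟨⟨l, mem_sphere_zero_iff_norm.2 hl⟩, trivial, w, fun k _ => hw k,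
      funext fun k => (hzw k).symm⟩

/-- `clos(Ω_N) = ⋃_{λ ∈ 𝕋} (λ · clos(Π))^N`, where `clos(Π)` is the closed right
half-plane. -/
theorem stmt_6 (N : ℕ) :
    closure (Omega N) =
      {z : Fin N → ℂ | ∃ l : ℂ, ‖l‖ = 1 ∧
        ∀ k, ∃ w : ℂ, 0 ≤ w.re ∧ z k = l * w} := by
  rw [Omega, ← Circle.univ_smul_pi_setOf, ← Circle.univ_smul_pi_setOf,
    closure_smul_of_isCompact isCompact_univ, closure_pi_set, closure_setOfPred_lt_re]
end

section
/- Let f be an L(U)-valued function holomorphic on Ω_N satisfying the four sign conditions: f(z)+f(z)* ≥ 0 on Π^N, f(z)+f(z)* ≤ 0 on (−Π)^N, i(f(z)*−f(z)) ≥ 0 on (iΠ)^N, and i(f(z)*−f(z)) ≤ 0 on (−iΠ)^N. Then f is homogeneous of degree one: f(λz) = λ f(z) for all λ ∈ ℂ \ {0} and z ∈ Ω_N. -/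
open ContinuousLinearMap

/-!
Pairing `f (c • x)` with a vector `u`, for a real point `x` of `Π^N`, gives a scalar function `g`
on `ℂ \ {0}` that maps each of the four open half-planes `Re > 0`, `Re < 0`, `Im > 0`, `Im < 0`
into its closure. Then `Re (g c / c) ≥ 0`, so `(1 + g c / c)⁻¹` is bounded by `1`; composed with
`exp` it is a bounded entire function, hence constant by Liouville, and `g c = c * g 1`.
Polarization turns this into `f (μ • x) = μ • f x` at real points of `Π^N`. The identity theorem on
the complex line through `Re z` in the direction `Im z` extends it to every `z ∈ Π^N`, and every
point of `Ω_N` is a nonzero multiple of a point of `Π^N`.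
-/

open Complex Set Filter Topology Bornology

theorem mem_omega_iff {N : ℕ} {z : Fin N → ℂ} :
    z ∈ Omega N ↔ ∃ l : ℂ, l ≠ 0 ∧ ∃ w : Fin N → ℂ, (∀ k, 0 < (w k).re) ∧ z = l • w := by
  constructor
  · rintro ⟨l, hl, hw⟩
    choose w hw_re hz using hw
    exact ⟨l, norm_ne_zero_iff.1 (by simp [hl]), w, hw_re, funext hz⟩
  · rintro ⟨l, hl, w, hw, rfl⟩
    have hl' : (‖l‖ : ℂ) ≠ 0 := by exact_mod_cast norm_ne_zero_iff.2 hl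
    refine ⟨l / ‖l‖, by simp [norm_ne_zero_iff.2 hl], fun k => ⟨‖l‖ * w k, ?_, ?_⟩⟩
    · simpa using mul_pos (norm_pos_iff.2 hl) (hw k)
    · field_simp
      rfl

theorem eq_of_isBounded_image_compl_zero {E : Type*} [NormedAddCommGroup E] [NormedSpace ℂ E]
    {H : ℂ → E} (hd : DifferentiableOn ℂ H {0}ᶜ) (hb : IsBounded (H '' {0}ᶜ))
    {c : ℂ} (hc : c ≠ 0) : H c = H 1 := by
  have hexp : Differentiable ℂ (H ∘ exp) := fun z =>
    (hd.differentiableAt (isOpen_compl_singleton.mem_nhds (exp_ne_zero z))).comp z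
      differentiableAt_exp
  have hrange : IsBounded (range (H ∘ exp)) :=
    hb.subset (range_subset_iff.2 fun z => mem_image_of_mem H (exp_ne_zero z))
  simpa [exp_log hc] using hexp.apply_eq_apply_of_bounded hrange (log c) 0

theorem eq_of_re_nonneg_on_compl_zero {h : ℂ → ℂ} (hd : DifferentiableOn ℂ h {0}ᶜ)
    (hre : ∀ c, c ≠ 0 → 0 ≤ (h c).re) {c : ℂ} (hc : c ≠ 0) : h c = h 1 := by
  have hone_le : ∀ c, c ≠ 0 → 1 ≤ ‖1 + h c‖ := fun c hc => by
    have := re_le_norm (1 + h c)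
    simp only [add_re, one_re] at this
    linarith [hre c hc]
  have hne : ∀ c, c ≠ 0 → 1 + h c ≠ 0 := fun c hc =>
    norm_pos_iff.1 (one_pos.trans_le (hone_le c hc))
  have hinv := eq_of_isBounded_image_compl_zero (H := fun c => (1 + h c)⁻¹)
    ((hd.const_add 1).inv fun c hc => hne c hc)
    (isBounded_iff_forall_norm_le.2 ⟨1, by
      rintro _ ⟨c, hc, rfl⟩
      simpa [norm_inv] using inv_le_one_of_one_le₀ (hone_le c hc)⟩) hc
  simpa using hinv

theorem eq_mul_of_quadrants {g : ℂ → ℂ} (hd : DifferentiableOn ℂ g {0}ᶜ)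
    (hre : ∀ c, 0 ≤ (g c).re * c.re) (him : ∀ c, 0 ≤ (g c).im * c.im)
    {c : ℂ} (hc : c ≠ 0) : g c = c * g 1 := by
  have hdiv := eq_of_re_nonneg_on_compl_zero (h := fun c => g c / c)
    (hd.div differentiableOn_id fun _ hc => hc)
    (fun c _ => by
      rw [div_re]
      exact add_nonneg (div_nonneg (hre c) (normSq_nonneg c))
        (div_nonneg (him c) (normSq_nonneg c))) hc
  simp only [div_one] at hdiv
  rw [← hdiv, mul_div_cancel₀ _ hc]

theorem mul_nonneg_of_sign_imp {a b : ℝ} (hpos : 0 < b → 0 ≤ a) (hneg : b < 0 → a ≤ 0) :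
    0 ≤ a * b := by
  rcases lt_trichotomy b 0 with hb | hb | hb
  · exact mul_nonneg_of_nonpos_of_nonpos (hneg hb) hb.le
  · simp [hb]
  · exact mul_nonneg (hpos hb) hb.le

section Operator

variable {U : Type*} [NormedAddCommGroup U] [InnerProductSpace ℂ U] [CompleteSpace U]

theorem re_inner_add_adjoint_apply (A : U →L[ℂ] U) (u : U) :
    (inner ℂ u ((A + adjoint A) u)).re = 2 * (inner ℂ u (A u)).re := by
  rw [add_apply, inner_add_right, adjoint_inner_right, ← inner_conj_symm, add_re, conj_re]
  ring

theorem re_inner_I_smul_adjoint_sub_apply (A : U →L[ℂ] U) (u : U) :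
    (inner ℂ u ((I • (adjoint A - A)) u)).re = 2 * (inner ℂ u (A u)).im := by
  rw [smul_apply, sub_apply, inner_smul_right, inner_sub_right, adjoint_inner_right,
    ← inner_conj_symm (A u)]
  simp only [mul_re, I_re, I_im, sub_re, sub_im, conj_re, conj_im]
  ring

theorem eq_smul_of_quadrants {f : ℂ → (U →L[ℂ] U)} (hd : DifferentiableOn ℂ f {0}ᶜ)
    (h1 : ∀ c : ℂ, 0 < c.re → (f c + adjoint (f c)).IsPositive)
    (h2 : ∀ c : ℂ, c.re < 0 → (-(f c + adjoint (f c))).IsPositive)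
    (h3 : ∀ c : ℂ, 0 < c.im → (I • (adjoint (f c) - f c)).IsPositive)
    (h4 : ∀ c : ℂ, c.im < 0 → (-(I • (adjoint (f c) - f c))).IsPositive)
    {c : ℂ} (hc : c ≠ 0) : f c = c • f 1 := by
  refine coe_injective ((ext_inner_map _ _).1 fun u => ?_)
  rw [← inner_conj_symm, ← inner_conj_symm (((c • f 1 : U →L[ℂ] U) : U →ₗ[ℂ] U) u)]
  congr 1
  have hg : DifferentiableOn ℂ (fun c => inner ℂ u (f c u)) {0}ᶜ :=
    (innerSL ℂ u).differentiable.comp_differentiableOn (hd.clm_apply (differentiableOn_const u))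
  have hre (c : ℂ) : 0 ≤ (inner ℂ u (f c u)).re * c.re := by
    refine mul_nonneg_of_sign_imp (fun hc => ?_) (fun hc => ?_)
    · have := (h1 c hc).re_inner_nonneg_right u
      rw [RCLike.re_to_complex, re_inner_add_adjoint_apply] at this
      linarith
    · have := (h2 c hc).re_inner_nonneg_right u
      rw [RCLike.re_to_complex, neg_apply, inner_neg_right, neg_re,
        re_inner_add_adjoint_apply] at this
      linarith
  have him (c : ℂ) : 0 ≤ (inner ℂ u (f c u)).im * c.im := by
    refine mul_nonneg_of_sign_imp (fun hc => ?_) (fun hc => ?_)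
    · have := (h3 c hc).re_inner_nonneg_right u
      rw [RCLike.re_to_complex, re_inner_I_smul_adjoint_sub_apply] at this
      linarith
    · have := (h4 c hc).re_inner_nonneg_right u
      rw [RCLike.re_to_complex, neg_apply, inner_neg_right, neg_re,
        re_inner_I_smul_adjoint_sub_apply] at this
      linarith
  simpa [inner_smul_right] using eq_mul_of_quadrants hg hre him hc

end Operator

theorem eqOn_zero_of_eventually_ofReal {E : Type*} [NormedAddCommGroup E] [NormedSpace ℂ E]
    [CompleteSpace E] {G : ℂ → E} {S : Set ℂ} (hS : IsOpen S) (hS' : IsPreconnected S)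
    (hG : DifferentiableOn ℂ G S) {x : ℝ} (hx : (x : ℂ) ∈ S) (hzero : ∀ᶠ t : ℝ in 𝓝 x, G t = 0) :
    EqOn G 0 S := by
  refine (hG.analyticOnNhd hS).eqOn_zero_of_preconnected_of_frequently_eq_zero hS' hx ?_
  have hofReal : Tendsto ((↑) : ℝ → ℂ) (𝓝[≠] x) (𝓝[≠] (x : ℂ)) :=
    continuous_ofReal.continuousWithinAt.tendsto_nhdsWithin fun _ ht => by simpa using ht
  exact hofReal.frequently (hzero.filter_mono nhdsWithin_le_nhds).frequently

theorem eq_zero_of_forall_ofReal {ι : Type*} [Fintype ι] {E : Type*} [NormedAddCommGroup E]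
    [NormedSpace ℂ E] [CompleteSpace E] {F : (ι → ℂ) → E}
    (hF : DifferentiableOn ℂ F {z | ∀ k, 0 < (z k).re})
    (hreal : ∀ x : ι → ℝ, (∀ k, 0 < x k) → F (fun k => x k) = 0)
    {z : ι → ℂ} (hz : ∀ k, 0 < (z k).re) : F z = 0 := by
  set A : ℂ → ι → ℂ := fun c k => (z k).re + c * (z k).im with hA
  set S : Set ℂ := A ⁻¹' {z | ∀ k, 0 < (z k).re}
  have hA_diff : Differentiable ℂ A := differentiable_pi.2 fun k => by fun_prop
  have hA_cont : Continuous A := hA_diff.continuous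
  have hS_open : IsOpen S := by
    refine IsOpen.preimage hA_cont ?_
    simp only [ofPred_forall]
    exact isOpen_iInter_of_finite fun k => isOpen_lt continuous_const
      (continuous_re.comp (continuous_apply k))
  have hS_conv : Convex ℝ S := by
    intro a ha b hb s t hs ht hst
    have hst' : (s : ℂ) + t = 1 := by exact_mod_cast hst
    have hcomb : A (s • a + t • b) = s • A a + t • A b := by
      funext k
      simp only [hA, Pi.add_apply, Pi.smul_apply, real_smul]
      linear_combination (-(z k).re : ℂ) * hst'
    have := (convex_pi (s := univ) fun k _ => convex_halfSpace_re_gt 0)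
      (mem_univ_pi.2 ha) (mem_univ_pi.2 hb) hs ht hst
    rw [← hcomb] at this
    exact mem_univ_pi.1 this
  have h0 : ((0 : ℝ) : ℂ) ∈ S := by simpa [S, hA] using hz
  have hzero : ∀ᶠ t : ℝ in 𝓝 0, F (A t) = 0 := by
    filter_upwards [continuous_ofReal.continuousAt.preimage_mem_nhds (hS_open.mem_nhds h0)]
      with t ht
    have hreal_pt : A t = fun k => (((z k).re + t * (z k).im : ℝ) : ℂ) := by
      funext k; push_cast; rfl
    rw [hreal_pt]
    exact hreal _ fun k => by simpa [S, hA] using ht k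
  have := eqOn_zero_of_eventually_ofReal hS_open hS_conv.isPreconnected
    (hF.comp hA_diff.differentiableOn (mapsTo_preimage _ _)) h0 hzero
    (show I ∈ S from fun k => by simpa [hA] using hz k)
  simpa [hA, mul_comm I, re_add_im] using this

theorem smul_mem_omega {N : ℕ} {c : ℂ} (hc : c ≠ 0) {w : Fin N → ℂ} (hw : ∀ k, 0 < (w k).re) :
    c • w ∈ Omega N :=
  mem_omega_iff.2 ⟨c, hc, w, hw, rfl⟩

theorem apply_smul_eq_smul_apply_of_re_pos {U : Type*} [NormedAddCommGroup U] [InnerProductSpace ℂ U]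
    [CompleteSpace U] {N : ℕ} {f : (Fin N → ℂ) → (U →L[ℂ] U)}
    (hf : DifferentiableOn ℂ f (Omega N))
    (h1 : ∀ z : Fin N → ℂ, (∀ k, 0 < (z k).re) → (f z + adjoint (f z)).IsPositive)
    (h2 : ∀ z : Fin N → ℂ, (∀ k, (z k).re < 0) → (-(f z + adjoint (f z))).IsPositive)
    (h3 : ∀ z : Fin N → ℂ, (∀ k, 0 < (z k).im) → (I • (adjoint (f z) - f z)).IsPositive)
    (h4 : ∀ z : Fin N → ℂ, (∀ k, (z k).im < 0) → (-(I • (adjoint (f z) - f z))).IsPositive)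
    {μ : ℂ} (hμ : μ ≠ 0) {w : Fin N → ℂ} (hw : ∀ k, 0 < (w k).re) : f (μ • w) = μ • f w := by
  have hreal (x : Fin N → ℝ) (hx : ∀ k, 0 < x k) :
      f (μ • fun k => (x k : ℂ)) - μ • f (fun k => (x k : ℂ)) = 0 := by
    have hray : DifferentiableOn ℂ (fun c : ℂ => f (c • fun k => (x k : ℂ))) {0}ᶜ :=
      hf.comp (differentiable_id.smul_const _).differentiableOn
        fun c hc => smul_mem_omega hc fun k => by simpa using hx k
    have := eq_smul_of_quadrants hray
      (fun c hc => h1 _ fun k => by simpa using mul_pos hc (hx k))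
      (fun c hc => h2 _ fun k => by simpa using mul_neg_of_neg_of_pos hc (hx k))
      (fun c hc => h3 _ fun k => by simpa using mul_pos hc (hx k))
      (fun c hc => h4 _ fun k => by simpa using mul_neg_of_neg_of_pos hc (hx k)) hμ
    simpa [sub_eq_zero] using this
  have hF : DifferentiableOn ℂ (fun y => f (μ • y) - μ • f y) {z | ∀ k, 0 < (z k).re} :=
    (hf.comp (differentiable_id.const_smul μ).differentiableOn
      fun y hy => smul_mem_omega hμ hy).sub
      ((hf.mono fun y hy => by simpa using smul_mem_omega one_ne_zero hy).const_smul μ)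
  exact sub_eq_zero.1 (eq_zero_of_forall_ofReal hF hreal hw)

/-- If an `L(U)`-valued function `f`, holomorphic on `Ω_N`, satisfies the four sign
conditions `Re f ≥ 0` on `Π^N`, `Re f ≤ 0` on `(-Π)^N`, `i(f* - f) ≥ 0` on `(iΠ)^N`
and `i(f* - f) ≤ 0` on `(-iΠ)^N`, then `f` is homogeneous of degree one on `Ω_N`. -/
theorem stmt_15 {U : Type*} [NormedAddCommGroup U] [InnerProductSpace ℂ U] [CompleteSpace U]
    (N : ℕ) (f : (Fin N → ℂ) → (U →L[ℂ] U))
    (hf : DifferentiableOn ℂ f (Omega N))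
    (h1 : ∀ z : Fin N → ℂ, (∀ k, 0 < (z k).re) →
      (f z + ContinuousLinearMap.adjoint (f z)).IsPositive)
    (h2 : ∀ z : Fin N → ℂ, (∀ k, (z k).re < 0) →
      (-(f z + ContinuousLinearMap.adjoint (f z))).IsPositive)
    (h3 : ∀ z : Fin N → ℂ, (∀ k, 0 < (z k).im) →
      (Complex.I • (ContinuousLinearMap.adjoint (f z) - f z)).IsPositive)
    (h4 : ∀ z : Fin N → ℂ, (∀ k, (z k).im < 0) →
      (-(Complex.I • (ContinuousLinearMap.adjoint (f z) - f z))).IsPositive) :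
    ∀ l : ℂ, l ≠ 0 → ∀ z ∈ Omega N, f (l • z) = l • f z := by
  intro l hl z hz
  obtain ⟨c, hc, w, hw, rfl⟩ := mem_omega_iff.1 hz
  have hom {μ : ℂ} (hμ : μ ≠ 0) := apply_smul_eq_smul_apply_of_re_pos hf h1 h2 h3 h4 hμ hw
  rw [smul_smul, hom (mul_ne_zero hl hc), hom hc, smul_smul]
end

section
/- Transfer-function kernel identity: let U = [[A, B],[C, D]] be a selfadjoint unitary operator on X ⊕ 𝒰 with X = ⊕_{k=1}^N X_k, and let 𝓕(w) = D + C P(w) (I_X − A P(w))⁻¹ B where P(w) = Σ_k w_k P_{X_k}. Then for all w, ω ∈ 𝔻^N: I_𝒰 − 𝓕(ω)*𝓕(w) = Σ_{k=1}^N (1 − conj(ω_k) w_k) · B* (I_X − P(conj(ω)) A)⁻¹ P_{X_k} (I_X − A P(w))⁻¹ B. -/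
/-!
Because `U² = I`, for all `M, M'` the product `(D + C M B)(D + C M' B)` collapses to
`1 - C (1 + A M' + M A - M (1 - A²) M') B`. Take `M = (P(ω) R(ω))* = Q(ω) P(conj ω)` and
`M' = P(w) R(w)`: the resolvent equations `R(w) = 1 + A P(w) R(w)` and
`Q(ω) = 1 + Q(ω) P(conj ω) A` turn the bracket into `Q(ω) (1 - P(conj ω) P(w)) R(w)`, and
`1 - P(conj ω) P(w) = ∑ k, (1 - conj ω_k w_k) P_k` since the `P_k` are orthogonal projections
summing to `1`.
-/

open ContinuousLinearMap

theorem mul_one_sub_mul_mul_eq_of_inverses {R : Type*} [Ring R] {a p p' q r : R}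
    (hr : (1 - a * p) * r = 1) (hq : q * (1 - p' * a) = 1) :
    q * ((1 - p' * p) * r) = 1 + a * (p * r) + q * p' * a - q * p' * ((1 - a * a) * (p * r)) := by
  have hr' : r = 1 + a * (p * r) := by
    calc r = (1 - a * p) * r + a * (p * r) := by noncomm_ring
      _ = 1 + a * (p * r) := by rw [hr]
  have hq' : q = 1 + q * (p' * a) := by
    calc q = q * (1 - p' * a) + q * (p' * a) := by noncomm_ring
      _ = 1 + q * (p' * a) := by rw [hq]
  calc q * ((1 - p' * p) * r) = q * r - q * p' * (p * r) := by noncomm_ring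
    _ = (1 + q * (p' * a)) * (1 + a * (p * r)) - q * p' * (p * r) := by rw [← hq', ← hr']
    _ = _ := by noncomm_ring

theorem sum_smul_mul_sum_smul {ι R A : Type*} [Fintype ι] [CommSemiring R] [Semiring A]
    [Algebra R A] {P : ι → A} (hidem : ∀ k, P k * P k = P k)
    (horth : ∀ j k, j ≠ k → P j * P k = 0) (a b : ι → R) :
    (∑ k, a k • P k) * (∑ k, b k • P k) = ∑ k, (a k * b k) • P k := by
  rw [Finset.sum_mul_sum]
  refine Finset.sum_congr rfl fun j _ => ?_
  rw [Finset.sum_eq_single_of_mem j (Finset.mem_univ j), smul_mul_smul_comm, hidem]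
  intro k _ hkj
  rw [smul_mul_smul_comm, horth j k (Ne.symm hkj), smul_zero]

theorem star_sum_smul {ι R A : Type*} [Fintype ι] [CommSemiring R] [StarRing R]
    [AddCommMonoid A] [StarAddMonoid A] [Module R A] [StarModule R A] {P : ι → A}
    (hP : ∀ k, IsSelfAdjoint (P k)) (c : ι → R) :
    star (∑ k, c k • P k) = ∑ k, star (c k) • P k := by
  simp only [star_sum, star_smul, (hP _).star_eq]

section Colligation

variable {𝕜 X U : Type*} [RCLike 𝕜] [NormedAddCommGroup X] [NormedAddCommGroup U]

theorem transfer_mul_transfer_eq [NormedSpace 𝕜 X] [NormedSpace 𝕜 U]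
    {A : X →L[𝕜] X} {B : U →L[𝕜] X} {C : X →L[𝕜] U} {D : U →L[𝕜] U}
    (hXX : A * A + B.comp C = 1) (hXU : A.comp B + B.comp D = 0)
    (hUX : C.comp A + D.comp C = 0) (hUU : C.comp B + D * D = 1) (M M' : X →L[𝕜] X) :
    (D + C.comp (M.comp B)) * (D + C.comp (M'.comp B)) =
      1 - C.comp ((1 + A * M' + M * A - M * ((1 - A * A) * M')).comp B) := by
  have hBC : ∀ x, B (C x) = x - A (A x) := fun x => eq_sub_of_add_eq' congr($hXX x)
  have hBD : ∀ u, B (D u) = -A (B u) := fun u => eq_neg_of_add_eq_zero_right congr($hXU u)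
  have hDC : ∀ x, D (C x) = -C (A x) := fun x => eq_neg_of_add_eq_zero_right congr($hUX x)
  have hDD : ∀ u, D (D u) = u - C (B u) := fun u => eq_sub_of_add_eq' congr($hUU u)
  ext u
  simp only [mul_apply_eq_comp, one_apply_eq_self, add_apply, sub_apply, comp_apply, map_add,
    map_sub, map_neg, hBC, hBD, hDC, hDD]
  abel

theorem adjoint_transfer [InnerProductSpace 𝕜 X] [CompleteSpace X]
    [InnerProductSpace 𝕜 U] [CompleteSpace U] {B : U →L[𝕜] X} {D : U →L[𝕜] U}
    (hD : IsSelfAdjoint D) (M : X →L[𝕜] X) :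
    adjoint (D + (adjoint B).comp (M.comp B)) = D + (adjoint B).comp ((adjoint M).comp B) := by
  rw [map_add, ← star_eq_adjoint D, hD.star_eq, adjoint_comp, adjoint_comp, adjoint_adjoint,
    comp_assoc]

end Colligation

theorem stmt_18_general {X 𝒰 : Type*}
    [NormedAddCommGroup X] [InnerProductSpace ℂ X] [CompleteSpace X]
    [NormedAddCommGroup 𝒰] [InnerProductSpace ℂ 𝒰] [CompleteSpace 𝒰]
    (N : ℕ) (P : Fin N → (X →L[ℂ] X))
    (hPsa : ∀ k, star (P k) = P k)
    (hPidem : ∀ k, P k * P k = P k)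
    (hPorth : ∀ j k, j ≠ k → P j * P k = 0)
    (hPsum : ∑ k, P k = 1)
    (A : X →L[ℂ] X) (B : 𝒰 →L[ℂ] X) (C : X →L[ℂ] 𝒰) (D : 𝒰 →L[ℂ] 𝒰)
    -- the colligation operator `[[A,B],[C,D]]` is selfadjoint …
    (hA : star A = A) (hD : star D = D) (hC : C = ContinuousLinearMap.adjoint B)
    -- … and unitary (hence an involution): `U² = I` componentwise
    (hXX : A * A + B.comp C = 1)
    (hXU : A.comp B + B.comp D = 0)
    (hUX : C.comp A + D.comp C = 0)
    (hUU : C.comp B + D * D = 1)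
    (w ω : Fin N → ℂ)
    (Pw Pω Pcω : X →L[ℂ] X)
    (hPw : Pw = ∑ k, w k • P k) (hPω : Pω = ∑ k, ω k • P k)
    (hPcω : Pcω = ∑ k, (starRingEnd ℂ (ω k)) • P k)
    (Rw Rω Qω : X →L[ℂ] X)
    (hRw1 : (1 - A * Pw) * Rw = 1)
    (hRω1 : (1 - A * Pω) * Rω = 1)
    (hQω1 : (1 - Pcω * A) * Qω = 1) (hQω2 : Qω * (1 - Pcω * A) = 1)
    (Fw Fω : 𝒰 →L[ℂ] 𝒰)
    (hFw : Fw = D + C.comp ((Pw * Rw).comp B))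
    (hFω : Fω = D + C.comp ((Pω * Rω).comp B)) :
    1 - (ContinuousLinearMap.adjoint Fω) * Fw =
      ∑ k, (1 - starRingEnd ℂ (ω k) * w k) •
        ((ContinuousLinearMap.adjoint B).comp ((Qω * (P k * Rw)).comp B)) := by
  have hsPω : star Pω = Pcω := by
    rw [hPω, hPcω, star_sum_smul hPsa]
    simp only [starRingEnd_apply]
  have hsRω : star Rω = Qω := by
    refine left_inv_eq_right_inv ?_ hQω1
    have h := congr(star $hRω1)
    rwa [star_mul, star_sub, star_one, star_mul, hsPω, hA] at h
  have hFω' : adjoint Fω = D + C.comp ((Qω * Pcω).comp B) := by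
    rw [hFω, hC, adjoint_transfer hD, ← star_eq_adjoint, star_mul, hsRω, hsPω]
  have hdiag : 1 - Pcω * Pw = ∑ k, (1 - starRingEnd ℂ (ω k) * w k) • P k := by
    rw [hPcω, hPw, sum_smul_mul_sum_smul hPidem hPorth, ← hPsum]
    simp only [sub_smul, one_smul, Finset.sum_sub_distrib]
  rw [hFω', hFw, transfer_mul_transfer_eq hXX hXU hUX hUU,
    ← mul_one_sub_mul_mul_eq_of_inverses hRw1 hQω2, sub_sub_cancel, hdiag, ← hC]
  ext u
  simp only [comp_apply, mul_apply_eq_comp, sum_apply, smul_apply, Finset.sum_mul,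
    Finset.mul_sum, smul_mul_assoc, mul_smul_comm, map_sum, map_smul]

/-- Transfer-function kernel identity for a selfadjoint Agler unitary colligation
`U = [[A,B],[C,D]]` on `X ⊕ 𝒰` with `X = ⊕_k X_k` (orthogonal projections `P k`):
for the transfer function `𝓕(w) = D + C P(w)(I - A P(w))⁻¹ B` and `w, ω` in the unit
polydisk,
`I - 𝓕(ω)* 𝓕(w) = Σ_k (1 - conj(ω_k) w_k) B* (I - P(conj ω) A)⁻¹ P_k (I - A P(w))⁻¹ B`. -/
theorem stmt_18 {X 𝒰 : Type*}
    [NormedAddCommGroup X] [InnerProductSpace ℂ X] [CompleteSpace X]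
    [NormedAddCommGroup 𝒰] [InnerProductSpace ℂ 𝒰] [CompleteSpace 𝒰]
    (N : ℕ) (P : Fin N → (X →L[ℂ] X))
    (hPsa : ∀ k, star (P k) = P k)
    (hPidem : ∀ k, P k * P k = P k)
    (hPorth : ∀ j k, j ≠ k → P j * P k = 0)
    (hPsum : ∑ k, P k = 1)
    (A : X →L[ℂ] X) (B : 𝒰 →L[ℂ] X) (C : X →L[ℂ] 𝒰) (D : 𝒰 →L[ℂ] 𝒰)
    -- the colligation operator `[[A,B],[C,D]]` is selfadjoint …
    (hA : star A = A) (hD : star D = D) (hC : C = ContinuousLinearMap.adjoint B)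
    -- … and unitary (hence an involution): `U² = I` componentwise
    (hXX : A * A + B.comp C = 1)
    (hXU : A.comp B + B.comp D = 0)
    (hUX : C.comp A + D.comp C = 0)
    (hUU : C.comp B + D * D = 1)
    (w ω : Fin N → ℂ)
    (hw : ∀ k, ‖w k‖ < 1) (hω : ∀ k, ‖ω k‖ < 1)
    (Pw Pω Pcω : X →L[ℂ] X)
    (hPw : Pw = ∑ k, w k • P k) (hPω : Pω = ∑ k, ω k • P k)
    (hPcω : Pcω = ∑ k, (starRingEnd ℂ (ω k)) • P k)
    (Rw Rω Qω : X →L[ℂ] X)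
    (hRw1 : (1 - A * Pw) * Rw = 1) (hRw2 : Rw * (1 - A * Pw) = 1)
    (hRω1 : (1 - A * Pω) * Rω = 1) (hRω2 : Rω * (1 - A * Pω) = 1)
    (hQω1 : (1 - Pcω * A) * Qω = 1) (hQω2 : Qω * (1 - Pcω * A) = 1)
    (Fw Fω : 𝒰 →L[ℂ] 𝒰)
    (hFw : Fw = D + C.comp ((Pw * Rw).comp B))
    (hFω : Fω = D + C.comp ((Pω * Rω).comp B)) :
    1 - (ContinuousLinearMap.adjoint Fω) * Fw =
      ∑ k, (1 - starRingEnd ℂ (ω k) * w k) •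
        ((ContinuousLinearMap.adjoint B).comp ((Qω * (P k * Rw)).comp B)) :=
  stmt_18_general N P hPsa hPidem hPorth hPsum A B C D hA hD hC hXX hXU hUX hUU w ω Pw Pω Pcω hPw
    hPω hPcω Rw Rω Qω hRw1 hRω1 hQω1 hQω2 Fw Fω hFw hFω
end
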